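/- Let k ≥ 1, let γ_1 < γ_2 < … < γ_{k+1} be real labels, and let ρ : ℝ → ℝ be affine on each interval [γ_i, γ_{i+1}], i.e. ρ(γ_i^α) = (1−α)·ρ(γ_i) + α·ρ(γ_{i+1}) for all 1 ≤ i ≤ k and all α ∈ [0,1]. Then the convex biconjugates of the lifted dataterm ρ_lift := min_{1≤i≤k} ρ_i and of the label-restricted function σ coincide: ρ_lift^{**}(u) = σ^{**}(u) for every u ∈ ℝ^k. -/

import Mathlib

/-- Dot product (inner product) on ℝ^k. -/
noncomputable def dotk {k : ℕ} (v u : Fin k → ℝ) : ℝ := ∑ j, v j * u j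

/-- Convex conjugate of an extended-real-valued function on ℝ^k:
`f^*(v) = sup_u ⟨v,u⟩ - f(u)`. -/
noncomputable def conjV {k : ℕ} (f : (Fin k → ℝ) → EReal) (v : Fin k → ℝ) : EReal :=
  ⨆ u : Fin k → ℝ, (dotk v u : EReal) - f u

/-- The vector `1_i` : first `i` entries 1, remaining entries 0 (so `onevec k 0 = 0`). -/
noncomputable def onevec (k : ℕ) (i : ℕ) : Fin k → ℝ := fun j => if (j : ℕ) < i then 1 else 0

/-- `1_i^α` (with 0-based interval index `i`): first `i` entries 1, entry `i` equals `α`,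
remaining entries 0.  This is `α • 1_{i+1} + (1-α) • 1_i` in the 0-based numbering of `onevec`. -/
noncomputable def liftvec {k : ℕ} (i : Fin k) (α : ℝ) : Fin k → ℝ :=
  fun j => if (j : ℕ) < (i : ℕ) then 1 else if j = i then α else 0

/-- `γ_i^α = γ_i + α (γ_{i+1} - γ_i)`, with 0-based interval index `i`. -/
noncomputable def gammaAff {k : ℕ} (γ : Fin (k+1) → ℝ) (i : Fin k) (α : ℝ) : ℝ :=
  γ i.castSucc + α * (γ i.succ - γ i.castSucc)

/-- The lifted piece `ρ_i` : equals `ρ(γ_i^α)` if `u = 1_i^α` for some `α ∈ [0,1]`,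
and `+∞` otherwise (the set below is a singleton or empty, and `sInf ∅ = ⊤` in `EReal`). -/
noncomputable def rhoPiece {k : ℕ} (γ : Fin (k+1) → ℝ) (ρ : ℝ → ℝ) (i : Fin k)
    (u : Fin k → ℝ) : EReal :=
  sInf {c : EReal | ∃ α ∈ Set.Icc (0:ℝ) 1, u = liftvec i α ∧ c = (ρ (gammaAff γ i α) : EReal)}

/-- The label-restricted function `σ` : equals `ρ(γ_{i+1})` at `1_i` for `0 ≤ i ≤ k`
(here `γ` is 0-indexed, so `σ(onevec k i) = ρ(γ i)` for `i : Fin (k+1)`),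
and `+∞` at every other point. -/
noncomputable def sigmaF {k : ℕ} (γ : Fin (k+1) → ℝ) (ρ : ℝ → ℝ) (u : Fin k → ℝ) : EReal :=
  sInf {c : EReal | ∃ i : Fin (k+1), u = onevec k (i : ℕ) ∧ c = (ρ (γ i) : EReal)}

/-!
Both first conjugates equal `M(v) := max_i ⟨v, 1_i⟩ - ρ(γ_i)`, the maximum taken over the labels.
Indeed, the affine function `⟨v, ·⟩ - M(v)` lies below `σ` and below every `ρ_i`, and it touches
both `σ` and `ρ_lift` at a maximizing label, because every label is an end point of some segment.
Equal conjugates have equal biconjugates.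
-/

lemma EReal.coe_sub_le_coe_iff {a b : ℝ} {x : EReal} :
    (a : EReal) - x ≤ b ↔ ((a - b : ℝ) : EReal) ≤ x := by
  induction x with
  | bot => simp [-EReal.coe_sub]
  | coe x => norm_cast; constructor <;> intro h <;> linarith
  | top => simp

section conjugate

variable {k : ℕ} {f : (Fin k → ℝ) → EReal} {v : Fin k → ℝ} {M : ℝ}

lemma conjV_le_coe_iff : conjV f v ≤ M ↔ ∀ u, ((dotk v u - M : ℝ) : EReal) ≤ f u := by
  simp only [conjV, iSup_le_iff, EReal.coe_sub_le_coe_iff]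

lemma coe_sub_le_conjV {u : Fin k → ℝ} {c : ℝ} (h : f u ≤ c) :
    ((dotk v u - c : ℝ) : EReal) ≤ conjV f v :=
  le_iSup_of_le u (by rw [EReal.coe_sub]; exact EReal.sub_le_sub le_rfl h)

lemma conjV_eq_coe_of_touching_minorant (hmin : ∀ u, ((dotk v u - M : ℝ) : EReal) ≤ f u)
    {u₀ : Fin k → ℝ} (htouch : f u₀ ≤ ((dotk v u₀ - M : ℝ) : EReal)) : conjV f v = M :=
  le_antisymm (conjV_le_coe_iff.2 hmin) (by simpa using coe_sub_le_conjV (v := v) htouch)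

end conjugate

noncomputable def labelSupport {k : ℕ} (γ : Fin (k+1) → ℝ) (ρ : ℝ → ℝ) (v : Fin k → ℝ) : ℝ :=
  Finset.univ.sup' Finset.univ_nonempty fun i : Fin (k+1) => dotk v (onevec k i) - ρ (γ i)

section labels

variable {k : ℕ} {γ : Fin (k+1) → ℝ} {ρ : ℝ → ℝ} {v : Fin k → ℝ}

lemma le_labelSupport (i : Fin (k+1)) :
    dotk v (onevec k i) - ρ (γ i) ≤ labelSupport γ ρ v :=
  Finset.le_sup' (fun i : Fin (k+1) => dotk v (onevec k i) - ρ (γ i)) (Finset.mem_univ i)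

lemma exists_labelSupport_eq :
    ∃ i : Fin (k+1), labelSupport γ ρ v = dotk v (onevec k i) - ρ (γ i) := by
  obtain ⟨i, -, hi⟩ := Finset.exists_mem_eq_sup' Finset.univ_nonempty
    fun i : Fin (k+1) => dotk v (onevec k i) - ρ (γ i)
  exact ⟨i, hi⟩

lemma sigmaF_onevec_le (i : Fin (k+1)) : sigmaF γ ρ (onevec k i) ≤ ρ (γ i) :=
  sInf_le ⟨i, rfl, rfl⟩

lemma labelSupport_minorant_sigmaF (u : Fin k → ℝ) :
    ((dotk v u - labelSupport γ ρ v : ℝ) : EReal) ≤ sigmaF γ ρ u := by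
  refine le_sInf ?_
  rintro _ ⟨i, rfl, rfl⟩
  exact EReal.coe_le_coe_iff.2 (by linarith [le_labelSupport (v := v) (γ := γ) (ρ := ρ) i])

lemma conjV_sigmaF : conjV (sigmaF γ ρ) v = labelSupport γ ρ v := by
  obtain ⟨i, hi⟩ := exists_labelSupport_eq (v := v) (γ := γ) (ρ := ρ)
  refine conjV_eq_coe_of_touching_minorant labelSupport_minorant_sigmaF (u₀ := onevec k i) ?_
  rw [hi, sub_sub_cancel]
  exact sigmaF_onevec_le i

end labels

section lift

variable {k : ℕ} {γ : Fin (k+1) → ℝ} {ρ : ℝ → ℝ} {v : Fin k → ℝ}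

lemma liftvec_eq (i : Fin k) (α : ℝ) :
    liftvec i α = (1 - α) • onevec k i.castSucc + α • onevec k i.succ := by
  funext j
  simp only [liftvec, onevec, Fin.val_castSucc, Fin.val_succ, Pi.add_apply, Pi.smul_apply,
    smul_eq_mul, Fin.ext_iff]
  split_ifs <;> first | ring1 | (exfalso; omega)

lemma liftvec_zero (i : Fin k) : liftvec i 0 = onevec k i.castSucc := by
  simp [liftvec_eq]

lemma liftvec_one (i : Fin k) : liftvec i 1 = onevec k i.succ := by
  simp [liftvec_eq]

lemma dotk_liftvec (i : Fin k) (α : ℝ) :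
    dotk v (liftvec i α)
      = (1 - α) * dotk v (onevec k i.castSucc) + α * dotk v (onevec k i.succ) := by
  change v ⬝ᵥ liftvec i α = (1 - α) * (v ⬝ᵥ _) + α * (v ⬝ᵥ _)
  rw [liftvec_eq, dotProduct_add, dotProduct_smul, dotProduct_smul, smul_eq_mul, smul_eq_mul]

lemma rhoPiece_liftvec_le (i : Fin k) {α : ℝ} (hα : α ∈ Set.Icc (0:ℝ) 1) :
    rhoPiece γ ρ i (liftvec i α) ≤ ρ (gammaAff γ i α) :=
  sInf_le ⟨α, hα, rfl, rfl⟩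

lemma rhoLift_onevec_le (hk : 1 ≤ k) (j : Fin (k+1)) :
    ⨅ i, rhoPiece γ ρ i (onevec k j) ≤ ρ (γ j) := by
  rcases Fin.eq_castSucc_or_eq_last j with ⟨i, rfl⟩ | rfl
  · refine iInf_le_of_le i ?_
    simpa [liftvec_zero, gammaAff] using
      rhoPiece_liftvec_le (γ := γ) (ρ := ρ) i (α := 0) (by simp)
  · obtain ⟨m, rfl⟩ : ∃ m, k = m + 1 := ⟨k - 1, by omega⟩
    refine iInf_le_of_le (Fin.last m) ?_
    simpa [liftvec_one, gammaAff] using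
      rhoPiece_liftvec_le (γ := γ) (ρ := ρ) (Fin.last m) (α := 1) (by simp)

/-- On the `i`-th segment both `⟨v, ·⟩` and (by affinity of `ρ`) `ρ_i` interpolate their values at
the two end labels, so the minorant inequality only has to be checked at labels. -/
lemma labelSupport_minorant_rhoPiece
    (haff : ∀ i : Fin k, ∀ α ∈ Set.Icc (0:ℝ) 1,
      ρ (gammaAff γ i α) = (1 - α) * ρ (γ i.castSucc) + α * ρ (γ i.succ))
    (i : Fin k) (u : Fin k → ℝ) :
    ((dotk v u - labelSupport γ ρ v : ℝ) : EReal) ≤ rhoPiece γ ρ i u := by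
  refine le_sInf ?_
  rintro _ ⟨α, hα, rfl, rfl⟩
  refine EReal.coe_le_coe_iff.2 ?_
  have h₀ := le_labelSupport (v := v) (γ := γ) (ρ := ρ) i.castSucc
  have h₁ := le_labelSupport (v := v) (γ := γ) (ρ := ρ) i.succ
  rw [dotk_liftvec, haff i α hα]
  nlinarith [hα.1, hα.2]

lemma conjV_rhoLift (hk : 1 ≤ k)
    (haff : ∀ i : Fin k, ∀ α ∈ Set.Icc (0:ℝ) 1,
      ρ (gammaAff γ i α) = (1 - α) * ρ (γ i.castSucc) + α * ρ (γ i.succ)) :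
    conjV (fun w => ⨅ i, rhoPiece γ ρ i w) v = labelSupport γ ρ v := by
  obtain ⟨j, hj⟩ := exists_labelSupport_eq (v := v) (γ := γ) (ρ := ρ)
  refine conjV_eq_coe_of_touching_minorant
    (fun u => le_iInf fun i => labelSupport_minorant_rhoPiece haff i u) (u₀ := onevec k j) ?_
  rw [hj, sub_sub_cancel]
  exact rhoLift_onevec_le hk j

end lift

theorem biconj_rhoLift_eq_biconj_sigma_general {k : ℕ} (hk : 1 ≤ k) (γ : Fin (k+1) → ℝ)
    (ρ : ℝ → ℝ)
    (haff : ∀ i : Fin k, ∀ α ∈ Set.Icc (0:ℝ) 1,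
      ρ (gammaAff γ i α) = (1 - α) * ρ (γ i.castSucc) + α * ρ (γ i.succ))
    (u : Fin k → ℝ) :
    conjV (conjV (fun w => ⨅ i : Fin k, rhoPiece γ ρ i w)) u
      = conjV (conjV (sigmaF γ ρ)) u := by
  have hconj : conjV (fun w => ⨅ i : Fin k, rhoPiece γ ρ i w) = conjV (sigmaF γ ρ) :=
    funext fun v => (conjV_rhoLift hk haff).trans conjV_sigmaF.symm
  rw [hconj]

/-- Corollary 1. If `ρ` is affine on each interval `[γ_i, γ_{i+1}]`,
then the biconjugates of the lifted dataterm `ρ_lift = min_i ρ_i` and of the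
label-restricted function `σ` coincide. -/
theorem biconj_rhoLift_eq_biconj_sigma {k : ℕ} (hk : 1 ≤ k) (γ : Fin (k+1) → ℝ)
    (hγ : StrictMono γ) (ρ : ℝ → ℝ)
    (haff : ∀ i : Fin k, ∀ α ∈ Set.Icc (0:ℝ) 1,
      ρ (gammaAff γ i α) = (1 - α) * ρ (γ i.castSucc) + α * ρ (γ i.succ))
    (u : Fin k → ℝ) :
    conjV (conjV (fun w => ⨅ i : Fin k, rhoPiece γ ρ i w)) u
      = conjV (conjV (sigmaF γ ρ)) u :=
  biconj_rhoLift_eq_biconj_sigma_general hk γ ρ haff u
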